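/- arXiv:2405.10996 — 4 statements merged into one kernel-verified Lean document; each statement's English description precedes it below -/
import Mathlib

section
/- If M_{0,w}^ε(|y|_+^2) > ε, then M_{p,w}^ε(|y|_-^2) = ε; conversely, if M_{p,w}^ε(|y|_-^2) > ε, then M_{0,w}^ε(|y|_+^2) = ε. That is, at most one of the two regularized means can exceed ε for any fixed y ∈ R^n. -/
open Finset Real Filter Topology

noncomputable def M0 {n : ℕ} (ε : ℝ) (w : Fin n → ℕ) (z : Fin n → ℝ) : ℝ :=
  (ε ^ (∑ i, w i) + ∏ i, z i ^ w i) ^ ((1 : ℝ) / (∑ i, w i))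

noncomputable def Mp {n : ℕ} (ε : ℝ) (p : ℕ) (w : Fin n → ℕ) (z : Fin n → ℝ) : ℝ :=
  (ε ^ p + (1 / (∑ i, (w i : ℝ))) * ∑ i, (w i : ℝ) * z i ^ p) ^ ((1 : ℝ) / p)

noncomputable def posSq {n : ℕ} (y : Fin n → ℝ) : Fin n → ℝ := fun i => max (y i) 0 ^ 2

noncomputable def negSq {n : ℕ} (y : Fin n → ℝ) : Fin n → ℝ := fun i => min (y i) 0 ^ 2

noncomputable def hConj {n : ℕ} (ε : ℝ) (p : ℕ) (w : Fin n → ℕ) (y : Fin n → ℝ) : ℝ :=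
  M0 ε w (posSq y) ^ ((1 : ℝ) / 2) - Mp ε p w (negSq y) ^ ((1 : ℝ) / 2)

noncomputable def hDisj {n : ℕ} (ε : ℝ) (p : ℕ) (w : Fin n → ℕ) (y : Fin n → ℝ) : ℝ :=
  - hConj ε p w (fun i => - y i)

/-!
At each coordinate one of `max (y i) 0` and `min (y i) 0` vanishes. Hence, if the product in `M0`
is nonzero, every coordinate with positive weight is positive and the sum in `Mp` vanishes. A mean
whose product or sum vanishes is `(ε ^ k) ^ (1 / k) = ε`.
-/

lemma posSq_mul_negSq {n : ℕ} (y : Fin n → ℝ) (i : Fin n) : posSq y i * negSq y i = 0 := by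
  rcases le_total (y i) 0 with hy | hy <;> simp [posSq, negSq, hy]

lemma M0_eq_of_prod_eq_zero {n : ℕ} {ε : ℝ} (hε : 0 ≤ ε) {w : Fin n → ℕ} {z : Fin n → ℝ}
    (hz : ∏ i, z i ^ w i = 0) : M0 ε w z = ε := by
  have hW : ∑ i, w i ≠ 0 := by
    intro hW
    rw [Finset.prod_eq_one fun i _ => by rw [Finset.sum_eq_zero_iff.mp hW i (mem_univ i), pow_zero]]
      at hz
    exact one_ne_zero hz
  rw [M0, hz, add_zero, one_div, pow_rpow_inv_natCast hε hW]

lemma Mp_eq_of_sum_eq_zero {n : ℕ} {ε : ℝ} (hε : 0 ≤ ε) {p : ℕ} (hp : p ≠ 0) {w : Fin n → ℕ}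
    {z : Fin n → ℝ} (hz : ∑ i, (w i : ℝ) * z i ^ p = 0) : Mp ε p w z = ε := by
  rw [Mp, hz, mul_zero, add_zero, one_div, pow_rpow_inv_natCast hε hp]

lemma prod_posSq_eq_zero_or_sum_negSq_eq_zero {n : ℕ} {p : ℕ} (hp : p ≠ 0) (w : Fin n → ℕ)
    (y : Fin n → ℝ) : ∏ i, posSq y i ^ w i = 0 ∨ ∑ i, (w i : ℝ) * negSq y i ^ p = 0 := by
  refine or_iff_not_imp_left.mpr fun hprod => Finset.sum_eq_zero fun i _ => ?_
  rcases Nat.eq_zero_or_pos (w i) with hwi | hwi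
  · simp [hwi]
  · have hpos : posSq y i ≠ 0 :=
      fun h => hprod (Finset.prod_eq_zero (mem_univ i) (by rw [h, zero_pow hwi.ne']))
    have hneg : negSq y i = 0 := (mul_eq_zero.mp (posSq_mul_negSq y i)).resolve_left hpos
    rw [hneg, zero_pow hp, mul_zero]

theorem means_mutually_exclusive_general {n : ℕ} (ε : ℝ) (hε : 0 < ε)
    (p : ℕ) (hp : 0 < p) (w : Fin n → ℕ) (y : Fin n → ℝ) :
    (ε < M0 ε w (posSq y) → Mp ε p w (negSq y) = ε) ∧
    (ε < Mp ε p w (negSq y) → M0 ε w (posSq y) = ε) := by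
  rcases prod_posSq_eq_zero_or_sum_negSq_eq_zero hp.ne' w y with hprod | hsum
  · rw [M0_eq_of_prod_eq_zero hε.le hprod]
    exact ⟨fun h => (lt_irrefl ε h).elim, fun _ => rfl⟩
  · rw [Mp_eq_of_sum_eq_zero hε.le hp.ne' hsum]
    exact ⟨fun _ => rfl, fun h => (lt_irrefl ε h).elim⟩

theorem means_mutually_exclusive {n : ℕ} (hn : 0 < n) (ε : ℝ) (hε : 0 < ε)
    (p : ℕ) (hp : 0 < p) (w : Fin n → ℕ) (hw : ∀ i, 0 < w i) (y : Fin n → ℝ) :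
    (ε < M0 ε w (posSq y) → Mp ε p w (negSq y) = ε) ∧
    (ε < Mp ε p w (negSq y) → M0 ε w (posSq y) = ε) :=
  means_mutually_exclusive_general ε hε p hp w y
end

section
/- Define the D-GMSR conjunction key function h∧(y) := (M_{0,w}^ε(|y|_+^2))^{1/2} − (M_{p,w}^ε(|y|_-^2))^{1/2}. Then h∧(y) < 0 if and only if min_i y_i < 0. -/
open Finset Real Filter Topology

/-!
With no negative entry, `|y|_-^2 = 0`, so the `p`-mean collapses to `ε` while the geometric mean
of the nonnegative vector `|y|_+^2` is at least `ε`. A negative entry `y_i` kills the product in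
the geometric mean, which drops to `ε`, and contributes `y_i^2 > 0` to the `p`-mean, which rises
above `ε`.
-/

lemma pow_rpow_one_div_natCast {x : ℝ} (hx : 0 ≤ x) {k : ℕ} (hk : k ≠ 0) :
    (x ^ k) ^ ((1 : ℝ) / k) = x := by
  rw [one_div, Real.pow_rpow_inv_natCast hx hk]

section Means

variable {n : ℕ} {ε : ℝ} {p : ℕ} {w : Fin n → ℕ} {z : Fin n → ℝ}

lemma M0_nonneg (hε : 0 ≤ ε) (hz : 0 ≤ z) : 0 ≤ M0 ε w z :=
  rpow_nonneg (add_nonneg (by positivity) (prod_nonneg fun i _ => pow_nonneg (hz i) _)) _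

lemma Mp_nonneg (hε : 0 ≤ ε) (hz : 0 ≤ z) : 0 ≤ Mp ε p w z :=
  rpow_nonneg (add_nonneg (by positivity) (mul_nonneg (by positivity)
    (sum_nonneg fun i _ => mul_nonneg (Nat.cast_nonneg _) (pow_nonneg (hz i) _)))) _

lemma le_M0 (hε : 0 ≤ ε) (hw : ∑ i, w i ≠ 0) (hz : 0 ≤ z) : ε ≤ M0 ε w z := by
  calc ε = (ε ^ ∑ i, w i) ^ ((1 : ℝ) / ∑ i, w i) := (pow_rpow_one_div_natCast hε hw).symm
    _ ≤ M0 ε w z := by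
      apply rpow_le_rpow (by positivity) _ (by positivity)
      exact le_add_of_nonneg_right (prod_nonneg fun i _ => pow_nonneg (hz i) _)

lemma M0_eq_of_apply_eq_zero (hε : 0 ≤ ε) {i : Fin n} (hwi : w i ≠ 0) (hzi : z i = 0) :
    M0 ε w z = ε := by
  have hw : ∑ j, w j ≠ 0 := (sum_pos' (fun j _ => Nat.zero_le _) ⟨i, mem_univ i,
    Nat.pos_of_ne_zero hwi⟩).ne'
  have hprod : ∏ j, z j ^ w j = 0 := prod_eq_zero (mem_univ i) (by rw [hzi, zero_pow hwi])
  rw [M0, hprod, add_zero, pow_rpow_one_div_natCast hε hw]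

lemma Mp_zero (hε : 0 ≤ ε) (hp : p ≠ 0) : Mp ε p w 0 = ε := by
  simp only [Mp, Pi.zero_apply, zero_pow hp, mul_zero, sum_const_zero, add_zero]
  exact pow_rpow_one_div_natCast hε hp

lemma lt_Mp (hε : 0 ≤ ε) (hp : p ≠ 0) (hz : 0 ≤ z) {i : Fin n} (hwi : w i ≠ 0)
    (hzi : 0 < z i) :
    ε < Mp ε p w z := by
  have hwi' : (0 : ℝ) < w i := Nat.cast_pos.mpr (Nat.pos_of_ne_zero hwi)
  have hsum : 0 < ∑ j, (w j : ℝ) * z j ^ p :=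
    sum_pos' (fun j _ => mul_nonneg (Nat.cast_nonneg _) (pow_nonneg (hz j) p))
      ⟨i, mem_univ i, mul_pos hwi' (pow_pos hzi p)⟩
  have hweight : 0 < ∑ j, (w j : ℝ) :=
    sum_pos' (fun j _ => Nat.cast_nonneg _) ⟨i, mem_univ i, hwi'⟩
  calc ε = (ε ^ p) ^ ((1 : ℝ) / p) := (pow_rpow_one_div_natCast hε hp).symm
    _ < Mp ε p w z := by
      apply rpow_lt_rpow (by positivity) _ (by positivity)
      exact lt_add_of_pos_right _ (mul_pos (by positivity) hsum)

end Means

section KeyFunction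

variable {n : ℕ}

lemma posSq_nonneg (y : Fin n → ℝ) : 0 ≤ posSq y := fun _ => sq_nonneg _

lemma negSq_nonneg (y : Fin n → ℝ) : 0 ≤ negSq y := fun _ => sq_nonneg _

lemma posSq_apply_eq_zero {y : Fin n → ℝ} {i : Fin n} (hi : y i ≤ 0) : posSq y i = 0 := by
  simp [posSq, hi]

lemma negSq_apply_pos {y : Fin n → ℝ} {i : Fin n} (hi : y i < 0) : 0 < negSq y i := by
  rw [negSq, min_eq_left hi.le]
  exact sq_pos_of_neg hi

lemma negSq_eq_zero {y : Fin n → ℝ} (hy : 0 ≤ y) : negSq y = 0 := by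
  ext i
  have hyi : 0 ≤ y i := hy i
  simp [negSq, hyi]

lemma hConj_neg_iff_M0_lt_Mp {ε : ℝ} (hε : 0 ≤ ε) (p : ℕ) (w : Fin n → ℕ)
    (y : Fin n → ℝ) :
    hConj ε p w y < 0 ↔ M0 ε w (posSq y) < Mp ε p w (negSq y) := by
  rw [hConj, sub_neg, rpow_lt_rpow_iff (M0_nonneg hε (posSq_nonneg y))
    (Mp_nonneg hε (negSq_nonneg y)) (by norm_num)]

end KeyFunction

theorem hConj_neg_iff_min_neg {n : ℕ} (hn : 0 < n) (ε : ℝ) (hε : 0 < ε)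
    (p : ℕ) (hp : 0 < p) (w : Fin n → ℕ) (hw : ∀ i, 0 < w i) (y : Fin n → ℝ) :
    hConj ε p w y < 0 ↔
      Finset.univ.inf' (Finset.univ_nonempty_iff.mpr ⟨⟨0, hn⟩⟩) y < 0 := by
  rw [hConj_neg_iff_M0_lt_Mp hε.le, inf'_lt_iff]
  constructor
  · contrapose!
    intro hy
    have hweight : ∑ i, w i ≠ 0 := (sum_pos (fun i _ => hw i) ⟨⟨0, hn⟩, mem_univ _⟩).ne'
    rw [negSq_eq_zero fun i => hy i (mem_univ i), Mp_zero hε.le hp.ne']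
    exact le_M0 hε.le hweight (posSq_nonneg y)
  · rintro ⟨i, -, hi⟩
    rw [M0_eq_of_apply_eq_zero hε.le (hw i).ne' (posSq_apply_eq_zero hi.le)]
    exact lt_Mp hε.le hp.ne' (negSq_nonneg y) (hw i).ne' (negSq_apply_pos hi)
end

section
/- Let y ∈ R^n with min_i y_i < 0 and suppose ε^{1/2} < |min_i y_i|. Then lim_{p→∞} h∧_{p,w,ε}(y) = min_i y_i + ε^{1/2}, where h∧_{p,w,ε}(y) := (M_{0,w}^ε(|y|_+^2))^{1/2} − (M_{p,w}^ε(|y|_-^2))^{1/2}. -/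
open Finset Real Filter Topology

theorem hConj_limit {n : ℕ} (hn : 0 < n) (ε : ℝ) (hε : 0 < ε)
    (w : Fin n → ℕ) (hw : ∀ i, 0 < w i) (y : Fin n → ℝ)
    (hmin : Finset.univ.inf' (Finset.univ_nonempty_iff.mpr ⟨⟨0, hn⟩⟩) y < 0)
    (hεmin : ε ^ ((1 : ℝ) / 2) <
      |Finset.univ.inf' (Finset.univ_nonempty_iff.mpr ⟨⟨0, hn⟩⟩) y|) :
    Tendsto (fun p : ℕ => hConj ε p w y) atTop
      (𝓝 (Finset.univ.inf' (Finset.univ_nonempty_iff.mpr ⟨⟨0, hn⟩⟩) y +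
        ε ^ ((1 : ℝ) / 2))) := by
  have hne : (Finset.univ : Finset (Fin n)).Nonempty := Finset.univ_nonempty_iff.mpr ⟨⟨0, hn⟩⟩
  set m : ℝ := Finset.univ.inf' (Finset.univ_nonempty_iff.mpr ⟨⟨0, hn⟩⟩) y with hm_def
  obtain ⟨j, -, hj⟩ := Finset.exists_mem_eq_inf' hne y
  have hmle : ∀ i, m ≤ y i := fun i => Finset.inf'_le y (Finset.mem_univ i)
  have habs : |m| = -m := abs_of_neg hmin
  -- ε < m^2
  have hεA : ε < m ^ 2 := by
    have h1 : (ε ^ ((1:ℝ)/2)) ^ 2 < |m| ^ 2 :=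
      pow_lt_pow_left₀ hεmin (Real.rpow_nonneg hε.le _) two_ne_zero
    have h2 : (ε ^ ((1:ℝ)/2)) ^ 2 = ε := by
      rw [← Real.rpow_natCast (ε ^ ((1:ℝ)/2)) 2, ← Real.rpow_mul hε.le]
      norm_num
    rwa [h2, sq_abs] at h1
  have hA : (0:ℝ) < m ^ 2 := hε.trans hεA
  set W : ℝ := ∑ i, (w i : ℝ) with hW_def
  have hW : 0 < W := Finset.sum_pos (fun i _ => by exact_mod_cast hw i) hne
  have ha_nonneg : ∀ i, 0 ≤ negSq y i := fun i => sq_nonneg _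
  have haA : ∀ i, negSq y i ≤ m ^ 2 := by
    intro i
    have h1 : m ≤ min (y i) 0 := le_min (hmle i) hmin.le
    have h2 : min (y i) 0 ≤ -m := (min_le_right _ _).trans (by linarith)
    have := sq_le_sq' (by linarith) h2
    simpa [negSq, neg_sq] using this
  have haj : negSq y j = m ^ 2 := by
    simp [negSq, ← hj, min_eq_left hmin.le]
    exact congrArg (fun x => x ^ 2) (min_eq_left hmin.le)
  -- first term: M0 = ε
  have hM0 : M0 ε w (posSq y) = ε := by
    have hprod : ∏ i, posSq y i ^ w i = 0 := by
      apply Finset.prod_eq_zero (Finset.mem_univ j)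
      have : posSq y j = 0 := by
        simp [posSq, ← hj, max_eq_right hmin.le]
        exact ⟨j, by rw [← hj]; exact hmin.le⟩
      rw [this]
      exact zero_pow (hw j).ne'
    have hN : (∑ i, w i) ≠ 0 := by
      have : 0 < ∑ i, w i := Finset.sum_pos (fun i _ => hw i) hne
      omega
    rw [M0, hprod, add_zero, ← Real.rpow_natCast ε, ← Real.rpow_mul hε.le]
    rw [mul_one_div, div_self (by exact_mod_cast hN), Real.rpow_one]
  -- squeeze for Mp
  have key : Tendsto (fun p : ℕ => Mp ε p w (negSq y)) atTop (𝓝 (m ^ 2)) := by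
    have hc : ∀ c : ℝ, 0 < c → Tendsto (fun p:ℕ => c ^ ((1:ℝ)/p)) atTop (𝓝 1) := by
      intro c hcpos
      have := (tendsto_const_nhds (x := c) (f := atTop (α := ℕ))).rpow
        tendsto_one_div_atTop_nhds_zero_nat (Or.inl hcpos.ne')
      simpa using this
    have hlow : Tendsto (fun p:ℕ => ((w j : ℝ)/W) ^ ((1:ℝ)/p) * m ^ 2) atTop (𝓝 (m ^ 2)) := by
      have := (hc ((w j : ℝ)/W) (div_pos (by exact_mod_cast hw j) hW)).mul_const (m ^ 2)
      simpa using this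
    have hup : Tendsto (fun p:ℕ => (2:ℝ) ^ ((1:ℝ)/p) * m ^ 2) atTop (𝓝 (m ^ 2)) := by
      have := (hc 2 two_pos).mul_const (m ^ 2)
      simpa using this
    apply tendsto_of_tendsto_of_tendsto_of_le_of_le' hlow hup
    · -- lower bound eventually
      filter_upwards [eventually_ge_atTop 1] with p hp
      have hp0 : (p:ℕ) ≠ 0 := by omega
      have hinner_low : ((w j : ℝ)/W) * (m ^ 2) ^ p ≤
          ε ^ p + (1/W) * ∑ i, (w i : ℝ) * negSq y i ^ p := by
        have hsum : (w j : ℝ) * (m ^ 2) ^ p ≤ ∑ i, (w i : ℝ) * negSq y i ^ p := by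
          rw [← haj]
          exact Finset.single_le_sum (f := fun i => (w i : ℝ) * negSq y i ^ p)
            (fun i _ => mul_nonneg (Nat.cast_nonneg _) (pow_nonneg (ha_nonneg i) p))
            (Finset.mem_univ j)
        have h1 : ((w j : ℝ)/W) * (m ^ 2) ^ p ≤ (1/W) * ∑ i, (w i : ℝ) * negSq y i ^ p := by
          rw [div_mul_eq_mul_div, one_div, inv_mul_eq_div]
          exact div_le_div_of_nonneg_right hsum hW.le
        nlinarith [pow_pos hε p]
      have := Real.rpow_le_rpow (by positivity) hinner_low (by positivity : (0:ℝ) ≤ (1:ℝ)/p)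
      simp only [one_div] at this
      rw [Real.mul_rpow (by positivity) (by positivity),
        Real.pow_rpow_inv_natCast hA.le hp0] at this
      rw [Mp]
      simp only [one_div]
      exact this
    · -- upper bound eventually
      filter_upwards [eventually_ge_atTop 1] with p hp
      have hp0 : (p:ℕ) ≠ 0 := by omega
      have hinner_up : ε ^ p + (1/W) * ∑ i, (w i : ℝ) * negSq y i ^ p ≤ 2 * (m ^ 2) ^ p := by
        have h1 : ε ^ p ≤ (m ^ 2) ^ p := pow_le_pow_left₀ hε.le hεA.le p
        have h2 : ∑ i, (w i : ℝ) * negSq y i ^ p ≤ ∑ i, (w i : ℝ) * (m ^ 2) ^ p := by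
          apply Finset.sum_le_sum
          intro i _
          exact mul_le_mul_of_nonneg_left
            (pow_le_pow_left₀ (ha_nonneg i) (haA i) p) (Nat.cast_nonneg _)
        have h3 : ∑ i, (w i : ℝ) * (m ^ 2) ^ p = W * (m ^ 2) ^ p := by
          rw [hW_def, Finset.sum_mul]
        have h4 : (1/W) * ∑ i, (w i : ℝ) * negSq y i ^ p ≤ (m ^ 2) ^ p := by
          rw [one_div, inv_mul_le_iff₀ hW]
          exact h3 ▸ h2
        linarith
      have hnn : (0:ℝ) ≤ ε ^ p + (1/W) * ∑ i, (w i : ℝ) * negSq y i ^ p :=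
        add_nonneg (pow_nonneg hε.le p) (mul_nonneg (by positivity)
          (Finset.sum_nonneg fun i _ =>
            mul_nonneg (Nat.cast_nonneg _) (pow_nonneg (ha_nonneg i) p)))
      have := Real.rpow_le_rpow hnn hinner_up (by positivity : (0:ℝ) ≤ (1:ℝ)/p)
      simp only [one_div] at this
      rw [Real.mul_rpow (by norm_num) (by positivity),
        Real.pow_rpow_inv_natCast hA.le hp0] at this
      rw [Mp]
      simp only [one_div]
      exact this
  -- conclude
  have hsqrt : Tendsto (fun p : ℕ => Mp ε p w (negSq y) ^ ((1:ℝ)/2)) atTop (𝓝 (-m)) := by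
    have := key.rpow_const (p := (1:ℝ)/2) (Or.inl hA.ne')
    have hval : (m ^ 2 : ℝ) ^ ((1:ℝ)/2) = -m := by
      have hnm : (0:ℝ) ≤ -m := by linarith
      rw [show m ^ 2 = (-m) ^ 2 by ring, ← Real.rpow_natCast (-m) 2, ← Real.rpow_mul hnm]
      norm_num
    rwa [hval] at this
  have : Tendsto (fun p : ℕ => ε ^ ((1:ℝ)/2) - Mp ε p w (negSq y) ^ ((1:ℝ)/2)) atTop
      (𝓝 (ε ^ ((1:ℝ)/2) - (-m))) := tendsto_const_nhds.sub hsqrt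
  have heq : (fun p : ℕ => hConj ε p w y) =
      fun p : ℕ => ε ^ ((1:ℝ)/2) - Mp ε p w (negSq y) ^ ((1:ℝ)/2) := by
    funext p
    rw [hConj, hM0]
  rw [heq]
  convert this using 2
  ring
end

section
/- Let y ∈ R^n with max_i y_i > 0 and ε^{1/2} < max_i y_i. Defining h∨_{p,w,ε}(y) := −h∧_{p,w,ε}(−y), we have lim_{p→∞} h∨_{p,w,ε}(y) = max_i y_i − ε^{1/2}. -/
open Finset Real Filter Topology

lemma rpow_one_div_nat_tendsto (c : ℝ) (hc : 0 < c) :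
    Tendsto (fun p : ℕ => c ^ ((1:ℝ)/p)) atTop (𝓝 1) := by
  have h : Tendsto (fun p : ℕ => Real.log c * ((1:ℝ)/p)) atTop (𝓝 0) := by
    simpa using (tendsto_const_nhds : Tendsto (fun _ : ℕ => Real.log c) atTop (𝓝 (Real.log c))).mul
      (tendsto_one_div_atTop_nhds_zero_nat : Tendsto (fun n : ℕ => 1 / (n : ℝ)) atTop (𝓝 0))
  have := (Real.continuous_exp.tendsto 0).comp h
  simp only [Function.comp, Real.exp_zero] at this
  refine this.congr fun p => ?_
  simp [Function.comp, Real.rpow_def_of_pos hc]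

theorem hDisj_limit {n : ℕ} (hn : 0 < n) (ε : ℝ) (hε : 0 < ε)
    (w : Fin n → ℕ) (hw : ∀ i, 0 < w i) (y : Fin n → ℝ)
    (hmax : 0 < Finset.univ.sup' (Finset.univ_nonempty_iff.mpr ⟨⟨0, hn⟩⟩) y)
    (hεmax : ε ^ ((1 : ℝ) / 2) <
      Finset.univ.sup' (Finset.univ_nonempty_iff.mpr ⟨⟨0, hn⟩⟩) y) :
    Tendsto (fun p : ℕ => hDisj ε p w y) atTop
      (𝓝 (Finset.univ.sup' (Finset.univ_nonempty_iff.mpr ⟨⟨0, hn⟩⟩) y -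
        ε ^ ((1 : ℝ) / 2))) := by
  have hne : (Finset.univ : Finset (Fin n)).Nonempty := Finset.univ_nonempty_iff.mpr ⟨⟨0, hn⟩⟩
  set M := Finset.univ.sup' (Finset.univ_nonempty_iff.mpr ⟨⟨0, hn⟩⟩) y with hMdef
  obtain ⟨i0, -, hi0⟩ := Finset.exists_mem_eq_sup' hne y
  have hi0' : y i0 = M := hi0.symm
  set W : ℕ := ∑ i, w i with hWdef
  have hWpos : 0 < W := Finset.sum_pos (fun i _ => hw i) hne
  have hWr : (0:ℝ) < ∑ i, (w i : ℝ) := by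
    rw [← Nat.cast_sum]; exact_mod_cast hWpos
  set a : Fin n → ℝ := fun i => max (y i) 0 ^ 2 with ha
  have haM : ∀ i, a i ≤ M ^ 2 := by
    intro i
    have h1 : max (y i) 0 ≤ M := max_le (Finset.le_sup' y (Finset.mem_univ i)) hmax.le
    exact pow_le_pow_left₀ (le_max_right _ _) h1 2
  have hai0 : a i0 = M ^ 2 := by
    simp [ha, hi0', max_eq_left hmax.le]
  have hεM2 : ε < M ^ 2 := by
    have : (ε ^ ((1:ℝ)/2)) ^ 2 < M ^ 2 :=
      pow_lt_pow_left₀ hεmax (Real.rpow_nonneg hε.le _) two_ne_zero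
    calc ε = (ε ^ ((1:ℝ)/2)) ^ 2 := by
            rw [← Real.rpow_natCast (ε ^ ((1:ℝ)/2)) 2, ← Real.rpow_mul hε.le]
            norm_num
      _ < M ^ 2 := this
  -- M0 part is constant ε
  have hM0 : M0 ε w (posSq (fun i => -y i)) = ε := by
    have hprod : ∏ i, (posSq (fun i => -y i)) i ^ w i = 0 := by
      apply Finset.prod_eq_zero (Finset.mem_univ i0)
      have : max (-y i0) 0 = 0 := max_eq_right (by linarith [hmax, hi0'.ge, hi0'.le] : -y i0 ≤ 0)
      simp [posSq, this, zero_pow (hw i0).ne']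
    rw [M0, hprod, add_zero, ← hWdef, ← Real.rpow_natCast ε W, ← Real.rpow_mul hε.le]
    rw [mul_one_div, div_self (by exact_mod_cast hWpos.ne' : (W:ℝ) ≠ 0), Real.rpow_one]
  have hneg : negSq (fun i => -y i) = a := by
    funext i
    simp only [negSq, ha]
    rw [show min (-y i) 0 = -max (y i) 0 by rw [← min_neg_neg]; simp, neg_pow]
    ring
  -- main limit of Mp
  have hmp : Tendsto (fun p : ℕ => Mp ε p w a) atTop (𝓝 (M ^ 2)) := by
    set c : ℝ := (w i0 : ℝ) / (∑ i, (w i : ℝ)) with hc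
    have hcpos : 0 < c := div_pos (by exact_mod_cast hw i0) hWr
    have hlow : Tendsto (fun p : ℕ => c ^ ((1:ℝ)/p) * M ^ 2) atTop (𝓝 (M ^ 2)) := by
      simpa using (rpow_one_div_nat_tendsto c hcpos).mul_const (M ^ 2)
    have hup : Tendsto (fun p : ℕ => (2:ℝ) ^ ((1:ℝ)/p) * M ^ 2) atTop (𝓝 (M ^ 2)) := by
      simpa using (rpow_one_div_nat_tendsto 2 two_pos).mul_const (M ^ 2)
    apply tendsto_of_tendsto_of_tendsto_of_le_of_le' hlow hup
    · filter_upwards [eventually_ge_atTop 1] with p hp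
      have hpne : ((p:ℝ)) ≠ 0 := by exact_mod_cast (Nat.one_le_iff_ne_zero.mp hp)
      have hS : c * (M ^ 2) ^ p ≤ ε ^ p + (1 / (∑ i, (w i : ℝ))) * ∑ i, (w i : ℝ) * a i ^ p := by
        have h1 : (w i0 : ℝ) * (M ^ 2) ^ p ≤ ∑ i, (w i : ℝ) * a i ^ p := by
          rw [← hai0]
          exact Finset.single_le_sum (f := fun i => (w i : ℝ) * a i ^ p)
            (fun i _ => by positivity) (Finset.mem_univ i0)
        have := mul_le_mul_of_nonneg_left h1 (le_of_lt (by positivity : (0:ℝ) < 1 / ∑ i, (w i : ℝ)))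
        have hε0 : (0:ℝ) ≤ ε ^ p := by positivity
        calc c * (M ^ 2) ^ p = (1 / (∑ i, (w i : ℝ))) * ((w i0 : ℝ) * (M ^ 2) ^ p) := by
              rw [hc]; ring
          _ ≤ (1 / (∑ i, (w i : ℝ))) * ∑ i, (w i : ℝ) * a i ^ p := this
          _ ≤ _ := by linarith
      calc c ^ ((1:ℝ)/p) * M ^ 2
          = (c * (M ^ 2) ^ p) ^ ((1:ℝ)/p) := by
            rw [Real.mul_rpow hcpos.le (by positivity),
              ← Real.rpow_natCast (M ^ 2) p, ← Real.rpow_mul (by positivity),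
              mul_one_div, div_self hpne, Real.rpow_one]
        _ ≤ Mp ε p w a := by
            rw [Mp]
            exact Real.rpow_le_rpow (by positivity) hS (by positivity)
    · filter_upwards [eventually_ge_atTop 1] with p hp
      have hpne : ((p:ℝ)) ≠ 0 := by exact_mod_cast (Nat.one_le_iff_ne_zero.mp hp)
      have hS : ε ^ p + (1 / (∑ i, (w i : ℝ))) * ∑ i, (w i : ℝ) * a i ^ p
          ≤ 2 * (M ^ 2) ^ p := by
        have h1 : ε ^ p ≤ (M ^ 2) ^ p :=
          pow_le_pow_left₀ hε.le hεM2.le p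
        have h2 : ∑ i, (w i : ℝ) * a i ^ p ≤ (∑ i, (w i : ℝ)) * (M ^ 2) ^ p := by
          rw [Finset.sum_mul]
          apply Finset.sum_le_sum
          intro i _
          exact mul_le_mul_of_nonneg_left
            (pow_le_pow_left₀ (by positivity) (haM i) p) (by positivity)
        have h3 : (1 / (∑ i, (w i : ℝ))) * ∑ i, (w i : ℝ) * a i ^ p ≤ (M ^ 2) ^ p := by
          rw [div_mul_eq_mul_div, one_mul, div_le_iff₀ hWr]
          calc ∑ i, (w i : ℝ) * a i ^ p ≤ (∑ i, (w i : ℝ)) * (M ^ 2) ^ p := h2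
            _ = (M ^ 2) ^ p * ∑ i, (w i : ℝ) := by ring
        linarith
      calc Mp ε p w a ≤ (2 * (M ^ 2) ^ p) ^ ((1:ℝ)/p) := by
            rw [Mp]
            exact Real.rpow_le_rpow (by positivity) hS (by positivity)
        _ = (2:ℝ) ^ ((1:ℝ)/p) * M ^ 2 := by
            rw [Real.mul_rpow (by norm_num) (by positivity),
              ← Real.rpow_natCast (M ^ 2) p, ← Real.rpow_mul (by positivity),
              mul_one_div, div_self hpne, Real.rpow_one]
  -- compose with sqrt
  have hcont : ContinuousAt (fun x : ℝ => x ^ ((1:ℝ)/2)) (M ^ 2) :=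
    Real.continuousAt_rpow_const _ _ (Or.inl (by positivity))
  have hsq : (M ^ 2) ^ ((1:ℝ)/2) = M := by
    rw [← Real.rpow_natCast M 2, ← Real.rpow_mul hmax.le]
    norm_num
  have hfinal : Tendsto (fun p : ℕ => Mp ε p w a ^ ((1:ℝ)/2)) atTop (𝓝 M) := by
    have := hcont.tendsto.comp hmp
    rwa [hsq] at this
  have := hfinal.sub_const (ε ^ ((1:ℝ)/2))
  refine this.congr fun p => ?_
  simp only [hDisj, hConj, hM0, hneg]
  ring
end
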